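/- For every b ∈ (−1,1) and every ρ > 0: ∫_ℝ |x|^{−b} · 2(1−b)ρ cos(πb/2) / ( |x|^{2(1−b)} + 2ρ |x|^{1−b} sin(πb/2) + ρ² ) dx = 2π(1−b). -/

import Mathlib

open MeasureTheory Real Set Filter Topology

/-- Every solution `η_ρ` of the singular Liouville equation `(-Δ)^{1/2} η = |x|^{-b} e^η`
on the real line has total mass `∫ |x|^{-b} e^{η_ρ} dx = 2π(1-b)`. -/
theorem stmt_19 (b ρ : ℝ) (hb : b ∈ Set.Ioo (-1 : ℝ) 1) (hρ : 0 < ρ) :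
    ∫ x : ℝ, |x| ^ (-b) *
      (2 * (1 - b) * ρ * Real.cos (π * b / 2) /
        (|x| ^ (2 * (1 - b)) + 2 * ρ * |x| ^ (1 - b) * Real.sin (π * b / 2) + ρ ^ 2)) =
      2 * π * (1 - b) := by
  obtain ⟨hb1, hb2⟩ := hb
  have hπ := Real.pi_pos
  set θ := π * b / 2 with hθdef
  set s := Real.sin θ with hsdef
  set c := Real.cos θ with hcdef
  have hθ1 : -(π / 2) < θ := by rw [hθdef]; nlinarith
  have hθ2 : θ < π / 2 := by rw [hθdef]; nlinarith
  have hc : 0 < c := Real.cos_pos_of_mem_Ioo ⟨hθ1, hθ2⟩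
  set α := 1 - b with hαdef
  have hα0 : 0 < α := by linarith
  have hd : 0 < ρ * c := mul_pos hρ hc
  set g : ℝ → ℝ := fun u => 2 * α * ρ * c / ((u + ρ * s) ^ 2 + (ρ * c) ^ 2) with hgdef
  -- the key one-dimensional integral via arctan
  have key : ∫ u in Ioi (0 : ℝ), ((u + ρ * s) ^ 2 + (ρ * c) ^ 2)⁻¹
      = (ρ * c)⁻¹ * (π / 2) - (ρ * c)⁻¹ * θ := by
    have hderiv : ∀ x ∈ Ici (0 : ℝ),
        HasDerivAt (fun u => (ρ * c)⁻¹ * Real.arctan ((u + ρ * s) / (ρ * c)))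
          (((x + ρ * s) ^ 2 + (ρ * c) ^ 2)⁻¹) x := by
      intro x _
      have h1 : HasDerivAt (fun u : ℝ => (u + ρ * s) / (ρ * c)) ((ρ * c)⁻¹) x := by
        simpa [div_eq_mul_inv] using
          (((hasDerivAt_id x).add_const (ρ * s)).div_const (ρ * c))
      have h2 := (Real.hasDerivAt_arctan ((x + ρ * s) / (ρ * c))).comp x h1
      have h3 := h2.const_mul ((ρ * c)⁻¹)
      refine h3.congr_deriv ?_
      have hne : (ρ * c) ≠ 0 := hd.ne'
      field_simp
      ring
    have htends : Tendsto (fun u : ℝ => (ρ * c)⁻¹ * Real.arctan ((u + ρ * s) / (ρ * c)))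
        atTop (𝓝 ((ρ * c)⁻¹ * (π / 2))) := by
      have h1 : Tendsto (fun u : ℝ => (u + ρ * s) / (ρ * c)) atTop atTop :=
        (tendsto_atTop_add_const_right atTop (ρ * s) tendsto_id).atTop_div_const hd
      exact ((Real.tendsto_arctan_atTop.mono_right nhdsWithin_le_nhds).comp h1).const_mul _
    have := integral_Ioi_of_hasDerivAt_of_nonneg'
      hderiv (fun x _ => by positivity) htends
    rw [this]
    have harc : Real.arctan ((0 + ρ * s) / (ρ * c)) = θ := by
      have : (0 + ρ * s) / (ρ * c) = Real.tan θ := by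
        rw [Real.tan_eq_sin_div_cos]
        rw [zero_add, ← hsdef, ← hcdef]
        field_simp
      rw [this, Real.arctan_tan hθ1 hθ2]
    rw [harc]
  have hIg : ∫ u in Ioi (0 : ℝ), g u = 2 * α * ρ * c * ((ρ * c)⁻¹ * (π / 2) - (ρ * c)⁻¹ * θ) := by
    have : ∀ u : ℝ, g u = 2 * α * ρ * c * ((u + ρ * s) ^ 2 + (ρ * c) ^ 2)⁻¹ := by
      intro u; simp only [hgdef]; rw [div_eq_mul_inv]
    simp_rw [this]
    rw [integral_const_mul, key]
  -- change of variables u = x ^ α on (0, ∞)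
  have cv : (∫ x in Ioi (0 : ℝ), (|α| * x ^ (α - 1)) • g (x ^ α)) = ∫ u in Ioi (0 : ℝ), g u :=
    integral_comp_rpow_Ioi g hα0.ne'
  -- reduce the whole-line integral
  have habs : (∫ x : ℝ, |x| ^ (-b) * (2 * α * ρ * c /
        (|x| ^ (2 * α) + 2 * ρ * |x| ^ α * s + ρ ^ 2)))
      = 2 * ∫ t in Ioi (0 : ℝ), t ^ (-b) * (2 * α * ρ * c /
        (t ^ (2 * α) + 2 * ρ * t ^ α * s + ρ ^ 2)) :=
    integral_comp_abs (f := fun t => t ^ (-b) * (2 * α * ρ * c /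
        (t ^ (2 * α) + 2 * ρ * t ^ α * s + ρ ^ 2)))
  have hpt : ∀ t ∈ Ioi (0 : ℝ), t ^ (-b) * (2 * α * ρ * c /
        (t ^ (2 * α) + 2 * ρ * t ^ α * s + ρ ^ 2))
      = (|α| * t ^ (α - 1)) • (α⁻¹ * g (t ^ α)) := by
    intro t ht
    have ht0 : (0 : ℝ) < t := ht
    have h1 : t ^ (2 * α) = (t ^ α) ^ 2 := by
      rw [← Real.rpow_natCast (t ^ α) 2, ← Real.rpow_mul ht0.le]
      norm_num
      ring_nf
    have h2 : t ^ (α - 1) = t ^ (-b) := by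
      congr 1
      rw [hαdef]; ring
    have hsc : s ^ 2 + c ^ 2 = 1 := Real.sin_sq_add_cos_sq θ
    have hden : t ^ (2 * α) + 2 * ρ * t ^ α * s + ρ ^ 2
        = (t ^ α + ρ * s) ^ 2 + (ρ * c) ^ 2 := by
      rw [h1]; nlinarith [hsc]
    rw [hden, abs_of_pos hα0, smul_eq_mul, h2, hgdef]
    have hαne : α ≠ 0 := hα0.ne'
    field_simp
  rw [show (1 : ℝ) - b = α from rfl] at *
  rw [habs, setIntegral_congr_fun measurableSet_Ioi hpt]
  have : (∫ t in Ioi (0 : ℝ), (|α| * t ^ (α - 1)) • (α⁻¹ * g (t ^ α)))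
      = α⁻¹ * ∫ t in Ioi (0 : ℝ), (|α| * t ^ (α - 1)) • g (t ^ α) := by
    rw [← integral_const_mul]
    congr 1
    ext t
    simp [smul_eq_mul]
    ring
  rw [this, cv, hIg]
  have hρcne : (ρ * c) ≠ 0 := hd.ne'
  have hαne : α ≠ 0 := hα0.ne'
  field_simp
  rw [hθdef, hαdef]
  ring
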